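/- arXiv:1912.10340 — 2 statements merged into one kernel-verified Lean document; each statement's English description precedes it below -/
import Mathlib

section
/- Let s ≥ 1 be an integer and let v ∈ ℝ^d with ‖v‖ ≤ 1. Consider the multivariate polynomial g : ℝ^d → ℝ defined by g(x) = T_s(1 − ⟨v, x⟩), where T_s is the s-th Chebyshev polynomial of the first kind. Then ‖g‖² ≤ (47 s)^s. -/
/-!
Write `T_s(1 - y) = ∑ₖ cₖ yᵏ`. The three-term recurrence `T_{n+2}(1 - y) = 2(1 - y) T_{n+1}(1 - y) -
T_n(1 - y)` bounds the ℓ¹ norm of the coefficients by `∑ |cₖ| ≤ 5^s`. On the multivariate side,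
by the multinomial theorem the coefficient of `x^α` in `⟨v, x⟩^k` is `(k choose α) v^α`, and
`(k choose α) ≤ k!` gives `‖⟨v, x⟩^k‖² ≤ k! ∑_α (k choose α) (v²)^α = k! ‖v‖^{2k}`. The triangle
inequality for the coefficient norm then yields `‖g‖ ≤ 5^s √(s!)`, so
`‖g‖² ≤ 25^s s! ≤ (25 s)^s ≤ (47 s)^s`.
-/

open Finset

/-- The coefficient norm `‖p‖ = sqrt (Σ_α c_α²)` of a multivariate polynomial. -/
noncomputable def mvNorm {d : ℕ} (p : MvPolynomial (Fin d) ℝ) : ℝ :=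
  Real.sqrt (∑ α ∈ p.support, (MvPolynomial.coeff α p) ^ 2)

/-- The multivariate polynomial `x ↦ ⟨v, x⟩`. -/
noncomputable def innerPoly {d : ℕ} (v : EuclideanSpace ℝ (Fin d)) :
    MvPolynomial (Fin d) ℝ :=
  ∑ i, MvPolynomial.C (v i) * MvPolynomial.X i

namespace Polynomial

noncomputable def l1Norm (p : ℝ[X]) : ℝ :=
  p.sum fun _ a => |a|

theorem l1Norm_eq_sum_range {p : ℝ[X]} {n : ℕ} (h : p.natDegree < n) :
    p.l1Norm = ∑ k ∈ range n, |p.coeff k| :=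
  sum_over_range' p (fun _ => abs_zero) n h

theorem l1Norm_sub_le (p q : ℝ[X]) : (p - q).l1Norm ≤ p.l1Norm + q.l1Norm := by
  have hn : max p.natDegree q.natDegree < max p.natDegree q.natDegree + 1 := Nat.lt_succ_self _
  rw [l1Norm_eq_sum_range ((natDegree_sub_le p q).trans_lt hn),
    l1Norm_eq_sum_range ((le_max_left _ _).trans_lt hn),
    l1Norm_eq_sum_range ((le_max_right _ _).trans_lt hn), ← sum_add_distrib]
  gcongr with k
  rw [coeff_sub]
  exact abs_sub _ _

theorem l1Norm_smul (a : ℝ) (p : ℝ[X]) : (a • p).l1Norm = |a| * p.l1Norm := by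
  have hn := p.natDegree.lt_succ_self
  rw [l1Norm_eq_sum_range ((natDegree_smul_le a p).trans_lt hn), l1Norm_eq_sum_range hn, mul_sum]
  simp only [coeff_smul, smul_eq_mul, abs_mul]

theorem l1Norm_X_mul (p : ℝ[X]) : (X * p).l1Norm = p.l1Norm := by
  have hn := p.natDegree.lt_succ_self
  have hX : (X * p).natDegree < p.natDegree + 2 :=
    natDegree_mul_le.trans_lt (by rw [natDegree_X]; omega)
  rw [l1Norm_eq_sum_range hX, l1Norm_eq_sum_range hn, sum_range_succ']
  simp only [coeff_X_mul, coeff_X_mul_zero, abs_zero, add_zero]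

theorem l1Norm_chebyshev_T_comp_one_sub_X_le (n : ℕ) :
    ((Chebyshev.T ℝ n).comp (1 - X)).l1Norm ≤ 5 ^ n := by
  induction n using Nat.twoStepInduction with
  | zero =>
    rw [l1Norm_eq_sum_range (n := 1) (by simp)]
    simp
  | one =>
    rw [Nat.cast_one, Chebyshev.T_one, X_comp,
      l1Norm_eq_sum_range (n := 2) ((natDegree_sub_le _ _).trans_lt (by simp))]
    norm_num [sum_range_succ, coeff_one, coeff_X]
  | more n ih₀ ih₁ =>
    set P := (Chebyshev.T ℝ (n + 1 : ℕ)).comp (1 - X)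
    have hrec : (Chebyshev.T ℝ (n + 2 : ℕ)).comp (1 - X)
        = (2 : ℝ) • P - (2 : ℝ) • (X * P) - (Chebyshev.T ℝ n).comp (1 - X) := by
      simp only [P, Nat.cast_add, Nat.cast_ofNat, Nat.cast_one, Chebyshev.T_add_two, sub_comp,
        mul_comp, X_comp, ofNat_comp, smul_eq_C_mul, C_ofNat]
      ring
    calc _ ≤ 2 * P.l1Norm + 2 * P.l1Norm + ((Chebyshev.T ℝ n).comp (1 - X)).l1Norm := by
          rw [hrec]
          refine (l1Norm_sub_le _ _).trans (add_le_add_left ((l1Norm_sub_le _ _).trans ?_) _)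
          simp [l1Norm_smul, l1Norm_X_mul]
      _ ≤ 4 * 5 ^ (n + 1) + 5 ^ n := by linarith
      _ ≤ 5 ^ (n + 2) := by ring_nf; linarith [pow_nonneg (by norm_num : (0 : ℝ) ≤ 5) n]

theorem natDegree_chebyshev_T_comp_one_sub_X_le (n : ℕ) :
    ((Chebyshev.T ℝ n).comp (1 - X)).natDegree ≤ n := natDegree_comp_le.trans <| by
  rw [Chebyshev.natDegree_T, Int.natAbs_natCast]
  exact (Nat.mul_le_mul_left n ((natDegree_sub_le _ _).trans (by simp))).trans_eq (mul_one n)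

end Polynomial

section mvNorm

variable {d : ℕ}

theorem mvNorm_nonneg (p : MvPolynomial (Fin d) ℝ) : 0 ≤ mvNorm p :=
  Real.sqrt_nonneg _

theorem mvNorm_sq (p : MvPolynomial (Fin d) ℝ) :
    mvNorm p ^ 2 = ∑ α ∈ p.support, MvPolynomial.coeff α p ^ 2 :=
  Real.sq_sqrt (sum_nonneg fun _ _ => sq_nonneg _)

theorem mvNorm_eq_norm_coeff {p : MvPolynomial (Fin d) ℝ} {S : Finset (Fin d →₀ ℕ)}
    (h : p.support ⊆ S) :
    mvNorm p = ‖(WithLp.toLp 2 fun α : S => MvPolynomial.coeff α p : EuclideanSpace ℝ S)‖ := by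
  rw [EuclideanSpace.norm_eq, mvNorm, sum_subset h fun α _ hα => by
    rw [MvPolynomial.notMem_support_iff.1 hα, sq, mul_zero]]
  simp only [Real.norm_eq_abs, sq_abs, sum_coe_sort S fun α => MvPolynomial.coeff α p ^ 2]

theorem mvNorm_zero : mvNorm (0 : MvPolynomial (Fin d) ℝ) = 0 := by
  simp [mvNorm]

theorem mvNorm_add_le (p q : MvPolynomial (Fin d) ℝ) : mvNorm (p + q) ≤ mvNorm p + mvNorm q := by
  classical
  rw [mvNorm_eq_norm_coeff MvPolynomial.support_add, mvNorm_eq_norm_coeff subset_union_left,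
    mvNorm_eq_norm_coeff subset_union_right]
  exact (norm_add_le _ _).trans_eq' (by simp only [MvPolynomial.coeff_add]; rfl)

theorem mvNorm_smul (a : ℝ) (p : MvPolynomial (Fin d) ℝ) : mvNorm (a • p) = |a| * mvNorm p := by
  rw [mvNorm_eq_norm_coeff MvPolynomial.support_smul, mvNorm_eq_norm_coeff subset_rfl,
    ← Real.norm_eq_abs, ← norm_smul, ← WithLp.toLp_smul]
  rfl

theorem mvNorm_sum_le {ι : Type*} (s : Finset ι) (f : ι → MvPolynomial (Fin d) ℝ) :
    mvNorm (∑ i ∈ s, f i) ≤ ∑ i ∈ s, mvNorm (f i) :=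
  le_sum_of_subadditive mvNorm mvNorm_zero.le mvNorm_add_le s f

theorem mvNorm_aeval_le (f : Polynomial ℝ) {w : MvPolynomial (Fin d) ℝ} {B : ℝ}
    (hB : ∀ k ≤ f.natDegree, mvNorm (w ^ k) ≤ B) :
    mvNorm (Polynomial.aeval w f) ≤ f.l1Norm * B := by
  calc mvNorm (Polynomial.aeval w f)
      = mvNorm (∑ k ∈ f.support, f.coeff k • w ^ k) := by
        simp only [Polynomial.aeval_def, Polynomial.eval₂_eq_sum, Polynomial.sum_def,
          Algebra.smul_def]
    _ ≤ ∑ k ∈ f.support, |f.coeff k| * mvNorm (w ^ k) :=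
        (mvNorm_sum_le _ _).trans_eq (by simp only [mvNorm_smul])
    _ ≤ ∑ k ∈ f.support, |f.coeff k| * B := sum_le_sum fun k hk =>
        mul_le_mul_of_nonneg_left (hB k (Polynomial.le_natDegree_of_mem_supp k hk)) (abs_nonneg _)
    _ = f.l1Norm * B := by rw [Polynomial.l1Norm, Polynomial.sum_def, sum_mul]

end mvNorm

theorem Finsupp.multinomial_le_factorial {σ : Type*} (α : σ →₀ ℕ) :
    α.multinomial ≤ (α.sum fun _ m => m).factorial :=
  Nat.le_of_dvd (Nat.factorial_pos _)
    (Dvd.intro_left _ (α.multinomial_eq ▸ Nat.multinomial_spec _ _))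

namespace MvPolynomial

open Nat

theorem sq_coeff_linear_pow_le {σ : Type*} [Fintype σ] (a : σ → ℝ) (α : σ →₀ ℕ) (k : ℕ) :
    coeff α ((∑ i, a i • X i : MvPolynomial σ ℝ) ^ k) ^ 2
      ≤ k ! * coeff α ((∑ i, a i ^ 2 • X i : MvPolynomial σ ℝ) ^ k) := by
  simp only [coeff_linearCombination_X_pow_of_fintype]
  split_ifs with hα
  · have hm : (α.multinomial : ℝ) ≤ k ! := by exact_mod_cast hα ▸ α.multinomial_le_factorial
    have hprod : (α.prod fun r m => a r ^ m) ^ 2 = α.prod fun r m => (a r ^ 2) ^ m := by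
      simp only [Finsupp.prod, ← prod_pow, ← pow_mul, mul_comm]
    rw [mul_pow, hprod, sq, mul_assoc]
    have : (0 : ℝ) ≤ α.prod fun r m => (a r ^ 2) ^ m := prod_nonneg fun _ _ => by positivity
    gcongr
  · simp

end MvPolynomial

section innerPoly

open MvPolynomial Nat

variable {d : ℕ}

theorem innerPoly_eq_sum_smul (v : EuclideanSpace ℝ (Fin d)) :
    innerPoly v = ∑ i, v i • X i := by
  simp only [innerPoly, smul_eq_C_mul]

theorem mvNorm_sq_innerPoly_pow_le (v : EuclideanSpace ℝ (Fin d)) (k : ℕ) :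
    mvNorm (innerPoly v ^ k) ^ 2 ≤ k ! * ‖v‖ ^ (2 * k) := by
  set q : MvPolynomial (Fin d) ℝ := (∑ i, v i ^ 2 • X i) ^ k
  have hle (α : Fin d →₀ ℕ) : coeff α (innerPoly v ^ k) ^ 2 ≤ k ! * coeff α q := by
    rw [innerPoly_eq_sum_smul]
    exact sq_coeff_linear_pow_le _ α k
  have hq_nonneg (α : Fin d →₀ ℕ) : 0 ≤ coeff α q :=
    (mul_nonneg_iff_of_pos_left (by positivity)).mp ((sq_nonneg _).trans (hle α))
  have hsupp : (innerPoly v ^ k).support ⊆ q.support := fun α hα => by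
    rw [mem_support_iff] at hα ⊢
    intro h0
    simpa [h0, hα] using hle α
  -- the multinomial theorem for `q`, read off as `q(1, …, 1) = (∑ vᵢ²)^k`
  have hq_sum : ∑ α ∈ q.support, coeff α q = ‖v‖ ^ (2 * k) := by
    have := eval_eq (fun _ => (1 : ℝ)) q
    simp only [one_pow, prod_const_one, mul_one] at this
    rw [← this, pow_mul, EuclideanSpace.real_norm_sq_eq]
    simp [q]
  calc mvNorm (innerPoly v ^ k) ^ 2
      = ∑ α ∈ (innerPoly v ^ k).support, coeff α (innerPoly v ^ k) ^ 2 := mvNorm_sq _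
    _ ≤ ∑ α ∈ (innerPoly v ^ k).support, k ! * coeff α q := sum_le_sum fun α _ => hle α
    _ ≤ ∑ α ∈ q.support, k ! * coeff α q :=
      sum_le_sum_of_subset_of_nonneg hsupp fun α _ _ => by have := hq_nonneg α; positivity
    _ = k ! * ‖v‖ ^ (2 * k) := by rw [← mul_sum, hq_sum]

end innerPoly

theorem mvNorm_sq_chebyshev_comp_inner_le_general {d s : ℕ}
    (v : EuclideanSpace ℝ (Fin d)) (hv : ‖v‖ ≤ 1) :
    (mvNorm (Polynomial.aeval (1 - innerPoly v)
        (Polynomial.Chebyshev.T ℝ (s : ℤ)))) ^ 2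
      ≤ (47 * (s : ℝ)) ^ s := by
  open Polynomial in
  set Q := (Chebyshev.T ℝ s).comp (1 - X)
  have hQ : aeval (1 - innerPoly v) (Chebyshev.T ℝ s) = aeval (innerPoly v) Q := by
    simp [Q, aeval_comp]
  have hpow (k : ℕ) (hk : k ≤ Q.natDegree) : mvNorm (innerPoly v ^ k) ≤ √(s.factorial) := by
    refine (Real.le_sqrt (mvNorm_nonneg _) (by positivity)).2 <|
      (mvNorm_sq_innerPoly_pow_le v k).trans ?_
    calc (k.factorial : ℝ) * ‖v‖ ^ (2 * k) ≤ k.factorial :=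
          mul_le_of_le_one_right (by positivity) (pow_le_one₀ (norm_nonneg v) hv)
      _ ≤ s.factorial := by exact_mod_cast Nat.factorial_le (hk.trans (natDegree_chebyshev_T_comp_one_sub_X_le s))
  have hg : mvNorm (aeval (innerPoly v) Q) ≤ 5 ^ s * √(s.factorial) :=
    (mvNorm_aeval_le Q hpow).trans <|
      mul_le_mul_of_nonneg_right (l1Norm_chebyshev_T_comp_one_sub_X_le s) (Real.sqrt_nonneg _)
  calc mvNorm (aeval (1 - innerPoly v) (Chebyshev.T ℝ s)) ^ 2
      ≤ (5 ^ s * √(s.factorial)) ^ 2 := by rw [hQ]; gcongr; exact mvNorm_nonneg _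
    _ = (25 : ℝ) ^ s * s.factorial := by
        rw [mul_pow, Real.sq_sqrt (by positivity), ← pow_mul, mul_comm s, pow_mul]; norm_num
    _ ≤ (25 : ℝ) ^ s * (s : ℝ) ^ s := by gcongr; exact_mod_cast Nat.factorial_le_pow s
    _ ≤ (47 * (s : ℝ)) ^ s := by rw [← mul_pow]; gcongr; norm_num

/-- For `s ≥ 1` and `‖v‖ ≤ 1`, the multivariate polynomial
`g(x) = T_s(1 − ⟨v, x⟩)` satisfies `‖g‖² ≤ (47 s)^s`. -/
theorem mvNorm_sq_chebyshev_comp_inner_le {d s : ℕ} (hs : 1 ≤ s)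
    (v : EuclideanSpace ℝ (Fin d)) (hv : ‖v‖ ≤ 1) :
    (mvNorm (Polynomial.aeval (1 - innerPoly v)
        (Polynomial.Chebyshev.T ℝ (s : ℤ)))) ^ 2
      ≤ (47 * (s : ℝ)) ^ s :=
  mvNorm_sq_chebyshev_comp_inner_le_general v hv
end

section
/- Let γ ∈ (0,1), let s = ⌈√(2/γ)⌉, and let v ∈ ℝ^d with ‖v‖ ≤ 1. (a) For every x ∈ ℝ^d with ‖x‖ ≤ 1 and ⟨v, x⟩ ≥ γ, one has 1 − ⟨v, x⟩ ∈ [0, 1] and hence |T_s(1 − ⟨v, x⟩)| ≤ 1. (b) For every x ∈ ℝ^d with ‖x‖ ≤ 1 and ⟨v, x⟩ ≤ −γ, one has T_s(1 − ⟨v, x⟩) ≥ 1 + s²γ ≥ 3, where T_s denotes the s-th Chebyshev polynomial of the first kind. -/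
/-!
Once `⟪v, x⟫ ∈ [-1, 1]` (Cauchy–Schwarz), part (a) is the bound `|T_s| ≤ 1` on `[-1, 1]`.
For part (b), on `[1, ∞)` the polynomial `T_n` lies above its tangent line `1 + n² (t - 1)` at `1`:
by the recurrence, `T_{n+1} - T_n = 2 (t - 1) T_n + (T_n - T_{n-1})` with `T_n ≥ 1`, so the increments
are at least `(2n + 1)(t - 1)`, and these sum to `n² (t - 1)`. The choice of `s` gives `s² γ ≥ 2`.
-/

open RealInnerProductSpace Polynomial.Chebyshev

theorem sub_one_mul_le_eval_T_real_succ_sub {x : ℝ} (hx : 1 ≤ x) (n : ℕ) :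
    (2 * n + 1) * (x - 1) ≤ (T ℝ (n + 1)).eval x - (T ℝ n).eval x := by
  induction n with
  | zero => simp
  | succ n ih =>
    have hrec : (T ℝ ((n : ℤ) + 1 + 1)).eval x =
        2 * x * (T ℝ ((n : ℤ) + 1)).eval x - (T ℝ n).eval x := by
      rw [add_assoc, one_add_one_eq_two, T_add_two]
      simp
    have hT : 1 ≤ (T ℝ ((n : ℤ) + 1)).eval x := one_le_eval_T_real _ hx
    push_cast
    rw [hrec]
    linarith [mul_nonneg (sub_nonneg.mpr hx) (sub_nonneg.mpr hT)]

theorem one_add_sq_mul_sub_one_le_eval_T_real {x : ℝ} (hx : 1 ≤ x) (n : ℕ) :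
    1 + (n : ℝ) ^ 2 * (x - 1) ≤ (T ℝ n).eval x := by
  induction n with
  | zero => simp
  | succ n ih =>
    have := sub_one_mul_le_eval_T_real_succ_sub hx n
    push_cast at this ⊢
    linarith

/-- Let `γ ∈ (0,1)`, `s = ⌈√(2/γ)⌉` and `‖v‖ ≤ 1`.
(a) If `‖x‖ ≤ 1` and `⟨v,x⟩ ≥ γ`, then `1 − ⟨v,x⟩ ∈ [0,1]` and `|T_s(1 − ⟨v,x⟩)| ≤ 1`.
(b) If `‖x‖ ≤ 1` and `⟨v,x⟩ ≤ −γ`, then `T_s(1 − ⟨v,x⟩) ≥ 1 + s²γ ≥ 3`. -/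
theorem chebyshev_comp_inner_bounds {d : ℕ} (γ : ℝ) (hγ : γ ∈ Set.Ioo (0 : ℝ) 1)
    (s : ℕ) (hs : s = ⌈Real.sqrt (2 / γ)⌉₊)
    (v : EuclideanSpace ℝ (Fin d)) (hv : ‖v‖ ≤ 1) :
    (∀ x : EuclideanSpace ℝ (Fin d), ‖x‖ ≤ 1 → ⟪v, x⟫ ≥ γ →
      (1 - ⟪v, x⟫) ∈ Set.Icc (0 : ℝ) 1 ∧
      |(Polynomial.Chebyshev.T ℝ (s : ℤ)).eval (1 - ⟪v, x⟫)| ≤ 1) ∧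
    (∀ x : EuclideanSpace ℝ (Fin d), ‖x‖ ≤ 1 → ⟪v, x⟫ ≤ -γ →
      (Polynomial.Chebyshev.T ℝ (s : ℤ)).eval (1 - ⟪v, x⟫) ≥ 1 + (s : ℝ) ^ 2 * γ ∧
      1 + (s : ℝ) ^ 2 * γ ≥ 3) := by
  have hγ0 : 0 < γ := hγ.1
  have hs2 : 2 ≤ (s : ℝ) ^ 2 * γ := by
    have : 2 / γ ≤ (s : ℝ) ^ 2 := (Real.sqrt_le_iff.mp (hs ▸ Nat.le_ceil _)).2
    rwa [div_le_iff₀ hγ0] at this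
  refine ⟨fun x hx hvx => ?_, fun x _ hvx => ?_⟩
  · have hle : ⟪v, x⟫ ≤ 1 :=
      (real_inner_le_norm v x).trans (mul_le_one₀ hv (norm_nonneg x) hx)
    exact ⟨⟨by linarith, by linarith⟩,
      abs_eval_T_real_le_one _ (abs_le.mpr ⟨by linarith, by linarith⟩)⟩
  · have hT := one_add_sq_mul_sub_one_le_eval_T_real (x := 1 - ⟪v, x⟫) (by linarith) s
    have : (s : ℝ) ^ 2 * γ ≤ (s : ℝ) ^ 2 * (1 - ⟪v, x⟫ - 1) :=
      mul_le_mul_of_nonneg_left (by linarith) (sq_nonneg _)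
    exact ⟨by linarith, by linarith⟩
end
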